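/- Let (A; G, H) be a (total) dynamic De Morgan algebra, i.e., G and H are everywhere-defined. Then the relation R_G on nonempty proper down-sets of A satisfies: both R_G and (R_G)⁻¹ are serial, and for every b ∈ A and every nonempty proper down-set D of A, κ_D(G(b)) = ⨅{ κ_E(b) : D R_G E } and κ_D(H(b)) = ⨅{ κ_E(b) : E R_G D }, both infima taken in M₂ (viewed as a complete lattice). -/

import Mathlib

/-- A down-set of a poset. -/
def IsDownSet {A : Type*} [PartialOrder A] (D : Set A) : Prop :=
  ∀ ⦃x y : A⦄, x ≤ y → y ∈ D → x ∈ D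

/-- A nonempty proper down-set of a poset. -/
def IsProperDownSet {A : Type*} [PartialOrder A] (D : Set A) : Prop :=
  D.Nonempty ∧ D ≠ Set.univ ∧ IsDownSet D

open Classical in
/-- `hD D a = false` iff `a ∈ D`. -/
noncomputable def hD {A : Type*} (D : Set A) (a : A) : Bool :=
  if a ∈ D then false else true

/-- `κ_D(a) = (h_D(a), h_D^∂(a))` where `h_D^∂(a) = ¬ h_D(a')`. -/
noncomputable def kappa {A : Type*} (neg : A → A) (D : Set A) (a : A) :
    Bool × Bool := (hD D a, ! hD D (neg a))

/-- The negation of the four-element De Morgan poset `M₂`: `(a,b)' = (¬b, ¬a)`. -/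
def negM2 (m : Bool × Bool) : Bool × Bool := (! m.2, ! m.1)

/-- The relation `R_G` on down-sets: `D R_G E` iff `κ_D(G x) ≤ κ_E(x)` for all `x ∈ dom G`. -/
def RG {A : Type*} (neg : A → A) (domG : Set A) (G : A → A) (D E : Set A) : Prop :=
  ∀ x ∈ domG, kappa neg D (G x) ≤ kappa neg E x

/-!
The inequality `κ_D(G b) ≤ κ_E(b)` for `D R_G E` is the definition of `R_G`, and for `E R_G D`
the inequality `κ_D(H b) ≤ κ_E(b)` follows from (P3). Since `M₂ = Bool × Bool`, the infimum is
attained as soon as each coordinate that is `false` on the left is `false` for some witness.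
For `G` the witnesses are the preimages of `D` under `G` and under its dual `x ↦ (G x')'`; for `H`
they are the preimages of `D` under `H` and under its dual. These are proper down-sets by (P1),
(P2), and the `R_G`-conditions come from (P3) together with the diagonal case `x = y` of (P4).
The first and third witnesses also give the seriality of `R_G` and of its inverse.
-/

section DynamicDeMorgan

variable {A : Type*}

def dualMap (neg f : A → A) (x : A) : A := neg (f (neg x))

lemma dualMap_neg {neg : A → A} (hinv : Function.Involutive neg) (f : A → A) (x : A) :
    dualMap neg f (neg x) = neg (f x) := by
  rw [dualMap, hinv x]

lemma kappa_le_kappa_iff {neg : A → A} {D E : Set A} {a b : A} :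
    kappa neg D a ≤ kappa neg E b ↔ (b ∈ E → a ∈ D) ∧ (neg a ∈ D → neg b ∈ E) := by
  unfold kappa hD; split_ifs <;> simp_all

lemma rg_univ_iff {neg G : A → A} {D E : Set A} :
    RG neg Set.univ G D E ↔ ∀ x, (x ∈ E → G x ∈ D) ∧ (neg (G x) ∈ D → neg x ∈ E) := by
  simp only [RG, Set.mem_univ, true_implies, kappa_le_kappa_iff]

section BoundedOrder

variable [PartialOrder A] [BoundedOrder A]

lemma IsProperDownSet.bot_mem {D : Set A} (hD : IsProperDownSet D) : ⊥ ∈ D :=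
  let ⟨⟨_, ha⟩, _, hdown⟩ := hD
  hdown bot_le ha

lemma IsProperDownSet.top_notMem {D : Set A} (hD : IsProperDownSet D) : ⊤ ∉ D :=
  fun htop => hD.2.1 (Set.eq_univ_of_forall fun _ => hD.2.2 le_top htop)

lemma IsProperDownSet.preimage {B : Type*} [PartialOrder B] [BoundedOrder B] {D : Set A}
    (hD : IsProperDownSet D) {f : B → A} (hf : Monotone f) (hf0 : f ⊥ = ⊥) (hf1 : f ⊤ = ⊤) :
    IsProperDownSet (f ⁻¹' D) :=
  ⟨⟨⊥, by simpa [hf0] using hD.bot_mem⟩,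
    fun h => hD.top_notMem (hf1 ▸ Set.eq_univ_iff_forall.mp h ⊤),
    fun _ _ hxy hy => hD.2.2 (hf hxy) hy⟩

lemma Function.Involutive.map_top_of_antitone {neg : A → A} (hinv : Function.Involutive neg)
    (hneg : Antitone neg) : neg ⊤ = ⊥ :=
  le_bot_iff.mp (hinv ⊥ ▸ hneg le_top)

lemma Function.Involutive.map_bot_of_antitone {neg : A → A} (hinv : Function.Involutive neg)
    (hneg : Antitone neg) : neg ⊥ = ⊤ := by
  rw [← hinv.map_top_of_antitone hneg, hinv ⊤]

lemma dualMap_bot {neg f : A → A} (hinv : Function.Involutive neg) (hneg : Antitone neg)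
    (hf : f ⊤ = ⊤) : dualMap neg f ⊥ = ⊥ := by
  rw [dualMap, hinv.map_bot_of_antitone hneg, hf, hinv.map_top_of_antitone hneg]

lemma dualMap_top {neg f : A → A} (hinv : Function.Involutive neg) (hneg : Antitone neg)
    (hf : f ⊥ = ⊥) : dualMap neg f ⊤ = ⊤ := by
  rw [dualMap, hinv.map_top_of_antitone hneg, hf, hinv.map_bot_of_antitone hneg]

end BoundedOrder

section PartialOrder

variable [PartialOrder A] {neg G H : A → A} {D E : Set A}

lemma Monotone.dualMap {f : A → A} (hneg : Antitone neg) (hf : Monotone f) :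
    Monotone (dualMap neg f) :=
  (hneg.comp_monotone hf).comp hneg

lemma dualMap_comp_le (hinv : Function.Involutive neg) (hneg : Antitone neg)
    (hunit : ∀ x, x ≤ H (dualMap neg G x)) (x : A) : dualMap neg H (G x) ≤ x := by
  have h := hneg (hunit (neg x))
  rwa [dualMap_neg hinv, hinv x] at h

lemma comp_le_self (hinv : Function.Involutive neg) (hneg : Antitone neg)
    (hunit : ∀ x, x ≤ H (dualMap neg G x)) (hH : ∀ x, H x ≤ dualMap neg H x) (x : A) :
    H (G x) ≤ x :=
  (hH (G x)).trans (dualMap_comp_le hinv hneg hunit x)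

lemma rg_preimage (hinv : Function.Involutive neg) (hD : IsDownSet D)
    (hG : ∀ x, G x ≤ dualMap neg G x) : RG neg Set.univ G D (G ⁻¹' D) :=
  rg_univ_iff.mpr fun x => ⟨id, hD (by simpa only [dualMap_neg hinv] using hG (neg x))⟩

lemma rg_dualMap_preimage (hinv : Function.Involutive neg) (hD : IsDownSet D)
    (hG : ∀ x, G x ≤ dualMap neg G x) : RG neg Set.univ G D (dualMap neg G ⁻¹' D) :=
  rg_univ_iff.mpr fun x =>
    ⟨hD (hG x), fun hx => by rwa [Set.mem_preimage, dualMap_neg hinv]⟩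

lemma rg_preimage_left (hinv : Function.Involutive neg) (hD : IsDownSet D)
    (hunit : ∀ x, x ≤ H (dualMap neg G x)) (hHG : ∀ x, H (G x) ≤ x) :
    RG neg Set.univ G (H ⁻¹' D) D :=
  rg_univ_iff.mpr fun x =>
    ⟨fun hx => hD (hHG x) hx, hD (by simpa only [dualMap_neg hinv] using hunit (neg x))⟩

lemma rg_dualMap_preimage_left (hinv : Function.Involutive neg) (hneg : Antitone neg)
    (hD : IsDownSet D) (hunit : ∀ x, x ≤ H (dualMap neg G x)) (hHG : ∀ x, H (G x) ≤ x) :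
    RG neg Set.univ G (dualMap neg H ⁻¹' D) D :=
  rg_univ_iff.mpr fun x =>
    ⟨fun hx => hD (dualMap_comp_le hinv hneg hunit x) hx, fun hx => by
      rw [Set.mem_preimage, dualMap_neg hinv] at hx
      exact hD (hneg (hHG x)) hx⟩

lemma kappa_le_kappa_of_rg (hinv : Function.Involutive neg) (hneg : Antitone neg)
    (hE : IsDownSet E) (hunit : ∀ x, x ≤ G (dualMap neg H x)) (hR : RG neg Set.univ G E D)
    (b : A) : kappa neg D (H b) ≤ kappa neg E b := by
  rw [rg_univ_iff] at hR
  refine kappa_le_kappa_iff.mpr ⟨fun hb => ?_, fun hb => ?_⟩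
  · have h := (hR (neg (H b))).2 (hE (dualMap_comp_le hinv hneg hunit b) hb)
    rwa [hinv] at h
  · exact hE (by simpa only [dualMap_neg hinv] using hunit (neg b)) ((hR (neg (H b))).1 hb)

lemma kappa_eq_sInf_of_witnesses {Q : Set A → Prop} {c b : A}
    (hlow : ∀ E, IsProperDownSet E → Q E → kappa neg D c ≤ kappa neg E b)
    (hmem : c ∈ D → ∃ E, (IsProperDownSet E ∧ Q E) ∧ b ∈ E)
    (hnotMem : neg c ∉ D → ∃ E, (IsProperDownSet E ∧ Q E) ∧ neg b ∉ E) :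
    kappa neg D c =
      sInf {m | ∃ E : Set A, IsProperDownSet E ∧ Q E ∧ m = kappa neg E b} := by
  set S := {m | ∃ E : Set A, IsProperDownSet E ∧ Q E ∧ m = kappa neg E b}
  have hS : ∀ E, IsProperDownSet E → Q E → sInf S ≤ kappa neg E b :=
    fun E hE hQ => sInf_le ⟨E, hE, hQ, rfl⟩
  refine le_antisymm (le_sInf ?_) ⟨?_, ?_⟩
  · rintro _ ⟨E, hE, hQ, rfl⟩
    exact hlow E hE hQ
  · by_cases hc : c ∈ D
    · obtain ⟨E, ⟨hE, hQ⟩, hb⟩ := hmem hc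
      simpa [kappa, hD, hb, hc] using (hS E hE hQ).1
    · simp [kappa, hD, hc]
  · by_cases hc : neg c ∈ D
    · simp [kappa, hD, hc]
    · obtain ⟨E, ⟨hE, hQ⟩, hb⟩ := hnotMem hc
      simpa [kappa, hD, hb, hc] using (hS E hE hQ).2

end PartialOrder

end DynamicDeMorgan

/-- For a (total) dynamic De Morgan algebra `(A; G, H)`: the relation `R_G`
and its inverse are serial, and for every `b ∈ A` and nonempty proper down-set
`D`, `κ_D(G(b)) = ⨅ {κ_E(b) : D R_G E}` and `κ_D(H(b)) = ⨅ {κ_E(b) : E R_G D}`. -/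
theorem stmt_15 {A : Type*} [PartialOrder A] [BoundedOrder A]
    (neg : A → A)
    (hanti : ∀ a b : A, a ≤ b → neg b ≤ neg a)
    (hinv : ∀ a : A, neg (neg a) = a)
    (G H : A → A)
    -- (P1)
    (hG0 : G ⊥ = ⊥) (hG1 : G ⊤ = ⊤) (hH0 : H ⊥ = ⊥) (hH1 : H ⊤ = ⊤)
    -- (P2)
    (hP2G : Monotone G) (hP2H : Monotone H)
    -- (P3)
    (hP3G : ∀ x : A, x ≤ G (neg (H (neg x))))
    (hP3H : ∀ x : A, x ≤ H (neg (G (neg x))))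
    -- (P4)
    (hP4G : ∀ x y : A, x ≤ y → G x ≤ neg (G (neg y)))
    (hP4H : ∀ x y : A, x ≤ y → H x ≤ neg (H (neg y))) :
    (∀ D : Set A, IsProperDownSet D →
      ∃ E : Set A, IsProperDownSet E ∧ RG neg Set.univ G D E) ∧
    (∀ D : Set A, IsProperDownSet D →
      ∃ E : Set A, IsProperDownSet E ∧ RG neg Set.univ G E D) ∧
    (∀ (b : A) (D : Set A), IsProperDownSet D →
      kappa neg D (G b) =
        sInf {m : Bool × Bool |
          ∃ E : Set A, IsProperDownSet E ∧ RG neg Set.univ G D E ∧ m = kappa neg E b} ∧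
      kappa neg D (H b) =
        sInf {m : Bool × Bool |
          ∃ E : Set A, IsProperDownSet E ∧ RG neg Set.univ G E D ∧ m = kappa neg E b}) := by
  have hneg : Antitone neg := fun a b => hanti a b
  have hinv : Function.Involutive neg := hinv
  have hGG : ∀ x, G x ≤ dualMap neg G x := fun x => hP4G x x le_rfl
  have hHG : ∀ x, H (G x) ≤ x := comp_le_self hinv hneg hP3H fun x => hP4H x x le_rfl
  have wG : ∀ D, IsProperDownSet D →
      IsProperDownSet (G ⁻¹' D) ∧ RG neg Set.univ G D (G ⁻¹' D) := fun D hD =>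
    ⟨hD.preimage hP2G hG0 hG1, rg_preimage hinv hD.2.2 hGG⟩
  have wGdual : ∀ D, IsProperDownSet D →
      IsProperDownSet (dualMap neg G ⁻¹' D) ∧ RG neg Set.univ G D (dualMap neg G ⁻¹' D) :=
    fun D hD => ⟨hD.preimage (hP2G.dualMap hneg) (dualMap_bot hinv hneg hG1)
      (dualMap_top hinv hneg hG0), rg_dualMap_preimage hinv hD.2.2 hGG⟩
  have wH : ∀ D, IsProperDownSet D →
      IsProperDownSet (H ⁻¹' D) ∧ RG neg Set.univ G (H ⁻¹' D) D := fun D hD =>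
    ⟨hD.preimage hP2H hH0 hH1, rg_preimage_left hinv hD.2.2 hP3H hHG⟩
  have wHdual : ∀ D, IsProperDownSet D →
      IsProperDownSet (dualMap neg H ⁻¹' D) ∧ RG neg Set.univ G (dualMap neg H ⁻¹' D) D :=
    fun D hD => ⟨hD.preimage (hP2H.dualMap hneg) (dualMap_bot hinv hneg hH1)
      (dualMap_top hinv hneg hH0), rg_dualMap_preimage_left hinv hneg hD.2.2 hP3H hHG⟩
  refine ⟨fun D hD => ⟨_, wG D hD⟩, fun D hD => ⟨_, wH D hD⟩, fun b D hD => ⟨?_, ?_⟩⟩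
  · refine kappa_eq_sInf_of_witnesses (fun E _ hR => hR b trivial)
      (fun hb => ⟨_, wG D hD, hb⟩) (fun hb => ⟨_, wGdual D hD, ?_⟩)
    rwa [Set.mem_preimage, dualMap_neg hinv]
  · refine kappa_eq_sInf_of_witnesses
      (fun E hE hR => kappa_le_kappa_of_rg hinv hneg hE.2.2 hP3G hR b)
      (fun hb => ⟨_, wH D hD, hb⟩) (fun hb => ⟨_, wHdual D hD, ?_⟩)
    rwa [Set.mem_preimage, dualMap_neg hinv]
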